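/- Support enumeration computes the minmax value: let 1 ≤ k ≤ n be integers and let u₁ : Fin k × Fin n × Fin n → ℝ be Player 1's payoff in a three-player game. Then the minmax value for Player 1 equals the minimum, over all pairs of subsets T₂, T₃ ⊆ Fin n with |T₂| = |T₃| = k, of min over mixed strategies σ₂ supported in T₂ and σ₃ supported in T₃ of max_{a ∈ Fin k} ∑_{j,k'} σ₂(j)·σ₃(k')·u₁(a,j,k'). -/

import Mathlib

/-- A mixed strategy on a finite strategy set `S`. -/
def IsMixedStrategy {S : Type*} [Fintype S] (σ : S → ℝ) : Prop :=
  (∀ s, 0 ≤ σ s) ∧ ∑ s, σ s = 1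

/-- The minmax (threat) value for Player 1 of the three-player game with payoff `u`:
the minimum over mixed strategy profiles of Players 2 and 3 of the best-response
payoff of Player 1 (the minimum is attained, so `sInf` is a minimum). -/
noncomputable def minmaxVal {S₁ S₂ S₃ : Type*} [Fintype S₁] [Fintype S₂] [Fintype S₃]
    (u : S₁ × S₂ × S₃ → ℝ) : ℝ :=
  sInf { v | ∃ σ₂ : S₂ → ℝ, ∃ σ₃ : S₃ → ℝ,
    IsMixedStrategy σ₂ ∧ IsMixedStrategy σ₃ ∧
    v = ⨆ a : S₁, ∑ j : S₂, ∑ k : S₃, σ₂ j * σ₃ k * u (a, j, k) }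

/-! Support reduction in the style of Carathéodory. With `σ₃` fixed, Player 1's payoffs are
`c *ᵥ σ₂` for a `k × n` matrix `c`. If `σ₂` has more than `k` positive entries, the directions `d`
supported there with `∑ d = 0` form a space of dimension at least `k`, so some `d ≠ 0` has
`c *ᵥ d ≤ 0`: a kernel vector if `c` is not injective on that space, and otherwise a preimage of
`(-1, …, -1)`. Moving along `d` until a coordinate vanishes shrinks the support without raising
any payoff. Shrinking `σ₂` and then `σ₃` and padding the supports to size `k` dominates every
profile by one from the enumerated family; the reverse comparison is trivial. -/

open Finset Matrix Module

theorem LinearMap.exists_ne_zero_forall_apply_nonpos {𝕜 V α : Type*} [Field 𝕜] [LinearOrder 𝕜]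
    [IsStrictOrderedRing 𝕜] [AddCommGroup V] [Module 𝕜 V] [FiniteDimensional 𝕜 V]
    [Fintype α] [Nonempty α] (L : V →ₗ[𝕜] α → 𝕜) (h : Fintype.card α ≤ finrank 𝕜 V) :
    ∃ v ≠ 0, ∀ a, L v a ≤ 0 := by
  by_cases hker : L.ker = ⊥
  · have hinj : Function.Injective L := LinearMap.ker_eq_bot.mp hker
    have hdim : finrank 𝕜 V = finrank 𝕜 (α → 𝕜) := by
      have := LinearMap.finrank_le_finrank_of_injective hinj
      rw [finrank_fintype_fun_eq_card] at *
      omega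
    obtain ⟨v, hv⟩ :=
      (LinearMap.injective_iff_surjective_of_finrank_eq_finrank hdim).mp hinj (fun _ => -1)
    refine ⟨v, ?_, fun a => by simp [hv]⟩
    rintro rfl
    simpa using congrFun hv (Classical.arbitrary α)
  · obtain ⟨v, hv, hv0⟩ := Submodule.exists_mem_ne_zero_of_ne_bot hker
    exact ⟨v, hv0, fun a => by simp [LinearMap.mem_ker.mp hv]⟩

theorem Matrix.exists_ne_zero_sum_eq_zero_mulVec_nonpos {ι α : Type*} [Fintype ι] [DecidableEq ι]
    [Fintype α] [Nonempty α] (c : Matrix α ι ℝ) (S : Finset ι) (hS : Fintype.card α < #S) :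
    ∃ d : ι → ℝ, d ≠ 0 ∧ (∀ j ∉ S, d j = 0) ∧ ∑ j, d j = 0 ∧ c *ᵥ d ≤ 0 := by
  let K : (ι → ℝ) →ₗ[ℝ] ℝ × (↥Sᶜ → ℝ) :=
    (∑ j, LinearMap.proj j).prod (LinearMap.funLeft ℝ ℝ Subtype.val)
  have hK : Fintype.card α ≤ finrank ℝ K.ker := by
    have h1 := K.finrank_range_add_finrank_ker
    have h2 := K.range.finrank_le
    simp only [finrank_prod, finrank_fintype_fun_eq_card, Module.finrank_self, Fintype.card_coe,
      card_compl] at h1 h2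
    have := S.card_le_univ
    omega
  obtain ⟨⟨d, hd⟩, hd0, hcd⟩ :=
    (c.mulVecLin.comp K.ker.subtype).exists_ne_zero_forall_apply_nonpos hK
  simp only [K, LinearMap.mem_ker, LinearMap.prod_apply, Function.prod_apply, Prod.mk_eq_zero,
    LinearMap.coe_sum, LinearMap.coe_proj, Finset.sum_apply, Function.eval, funext_iff,
    LinearMap.funLeft_apply, Pi.zero_apply, Subtype.forall, mem_compl] at hd
  exact ⟨d, fun h => hd0 (Subtype.ext h), hd.2, hd.1, hcd⟩

theorem Fintype.exists_neg_of_sum_eq_zero {ι : Type*} [Fintype ι] {d : ι → ℝ} (hd0 : d ≠ 0)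
    (hd : ∑ j, d j = 0) : ∃ j, d j < 0 := by
  by_contra! hnonneg
  exact hd0 ((sum_eq_zero_iff_of_nonneg hnonneg).mp hd)

/-- The ratio test of the simplex method. -/
theorem exists_add_mul_nonneg_eq_zero {ι : Type*} [Fintype ι] {σ d : ι → ℝ} (hσ : ∀ j, 0 ≤ σ j)
    (hd : ∃ j, d j < 0) :
    ∃ t : ℝ, 0 ≤ t ∧ (∀ j, 0 ≤ σ j + t * d j) ∧ ∃ j, d j < 0 ∧ σ j + t * d j = 0 := by
  classical
  obtain ⟨j₀, hj₀, hmin⟩ := exists_min_image {j | d j < 0} (fun j => σ j / -d j)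
    (by obtain ⟨j, hj⟩ := hd; exact ⟨j, by simpa using hj⟩)
  have hdj₀ : d j₀ < 0 := by simpa using hj₀
  have ht : 0 ≤ σ j₀ / -d j₀ := div_nonneg (hσ j₀) (by linarith)
  refine ⟨σ j₀ / -d j₀, ht, fun j => ?_, j₀, hdj₀, ?_⟩
  · rcases lt_or_ge (d j) 0 with hdj | hdj
    · linarith [(le_div_iff₀ (neg_pos.mpr hdj)).mp (hmin j (by simpa using hdj))]
    · nlinarith [hσ j]
  · field_simp [hdj₀.ne]
    ring

noncomputable def posSupport {ι : Type*} [Fintype ι] (σ : ι → ℝ) : Finset ι := {j | 0 < σ j}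

@[simp] theorem mem_posSupport {ι : Type*} [Fintype ι] {σ : ι → ℝ} {j : ι} :
    j ∈ posSupport σ ↔ 0 < σ j := by
  simp [posSupport]

namespace IsMixedStrategy

variable {ι α : Type*} [Fintype ι] [Fintype α] [Nonempty α] {σ : ι → ℝ}

theorem exists_posSupport_ssubset_mulVec_le (hσ : IsMixedStrategy σ) (c : Matrix α ι ℝ)
    (hcard : Fintype.card α < #(posSupport σ)) :
    ∃ σ', IsMixedStrategy σ' ∧ posSupport σ' ⊂ posSupport σ ∧ c *ᵥ σ' ≤ c *ᵥ σ := by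
  classical
  obtain ⟨d, hd0, hdS, hdsum, hcd⟩ := c.exists_ne_zero_sum_eq_zero_mulVec_nonpos _ hcard
  obtain ⟨t, ht, hnonneg, j₀, hdj₀, hj₀⟩ :=
    exists_add_mul_nonneg_eq_zero hσ.1 (Fintype.exists_neg_of_sum_eq_zero hd0 hdsum)
  have hsub : posSupport (σ + t • d) ⊆ posSupport σ := fun j hj => by
    by_contra hjS
    simp only [mem_posSupport, Pi.add_apply, Pi.smul_apply, smul_eq_mul, hdS j hjS, mul_zero,
      add_zero] at hj
    exact hjS (mem_posSupport.mpr hj)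
  refine ⟨σ + t • d, ⟨hnonneg, ?_⟩, (ssubset_iff_of_subset hsub).mpr ⟨j₀, ?_, ?_⟩, ?_⟩
  · simp [sum_add_distrib, ← mul_sum, hσ.2, hdsum]
  · by_contra hj₀S
    exact hdj₀.ne (hdS j₀ hj₀S)
  · simp [hj₀]
  · rw [mulVec_add, mulVec_smul]
    exact add_le_of_nonpos_right (smul_nonpos_of_nonneg_of_nonpos ht hcd)

theorem exists_card_posSupport_le_mulVec_le (hσ : IsMixedStrategy σ) (c : Matrix α ι ℝ) :
    ∃ σ', IsMixedStrategy σ' ∧ #(posSupport σ') ≤ Fintype.card α ∧ c *ᵥ σ' ≤ c *ᵥ σ := by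
  induction h : #(posSupport σ) using Nat.strong_induction_on generalizing σ with
  | _ m ih =>
    rcases le_or_gt m (Fintype.card α) with hm | hm
    · exact ⟨σ, hσ, h ▸ hm, le_rfl⟩
    obtain ⟨σ₁, hσ₁, hsub, hle₁⟩ := hσ.exists_posSupport_ssubset_mulVec_le c (h ▸ hm)
    obtain ⟨σ', hσ', hcard, hle⟩ := ih _ (h ▸ card_lt_card hsub) hσ₁ rfl
    exact ⟨σ', hσ', hcard, hle.trans hle₁⟩

end IsMixedStrategy

section Game

variable {S₁ S₂ S₃ : Type*} [Fintype S₂] [Fintype S₃]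

def expectedPayoff (u : S₁ × S₂ × S₃ → ℝ) (σ₂ : S₂ → ℝ) (σ₃ : S₃ → ℝ) (a : S₁) : ℝ :=
  ∑ j, ∑ k, σ₂ j * σ₃ k * u (a, j, k)

theorem expectedPayoff_eq_mulVec_left (u : S₁ × S₂ × S₃ → ℝ) (σ₂ : S₂ → ℝ) (σ₃ : S₃ → ℝ) :
    expectedPayoff u σ₂ σ₃ = (of fun a j => ∑ k, σ₃ k * u (a, j, k)) *ᵥ σ₂ := by
  ext a
  simp only [expectedPayoff, mulVec, dotProduct, of_apply, sum_mul]
  exact sum_congr rfl fun j _ => sum_congr rfl fun k _ => by ring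

theorem expectedPayoff_eq_mulVec_right (u : S₁ × S₂ × S₃ → ℝ) (σ₂ : S₂ → ℝ) (σ₃ : S₃ → ℝ) :
    expectedPayoff u σ₂ σ₃ = (of fun a k => ∑ j, σ₂ j * u (a, j, k)) *ᵥ σ₃ := by
  ext a
  simp only [expectedPayoff, mulVec, dotProduct, of_apply, sum_mul]
  rw [sum_comm]
  exact sum_congr rfl fun k _ => sum_congr rfl fun j _ => by ring

theorem exists_card_posSupport_le_expectedPayoff_le [Fintype S₁] [Nonempty S₁]
    (u : S₁ × S₂ × S₃ → ℝ) {σ₂ : S₂ → ℝ} {σ₃ : S₃ → ℝ} (h₂ : IsMixedStrategy σ₂)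
    (h₃ : IsMixedStrategy σ₃) :
    ∃ τ₂ τ₃, IsMixedStrategy τ₂ ∧ IsMixedStrategy τ₃ ∧ #(posSupport τ₂) ≤ Fintype.card S₁ ∧
      #(posSupport τ₃) ≤ Fintype.card S₁ ∧ expectedPayoff u τ₂ τ₃ ≤ expectedPayoff u σ₂ σ₃ := by
  obtain ⟨τ₂, hτ₂, hcard₂, hle₂⟩ := h₂.exists_card_posSupport_le_mulVec_le
    (of fun a j => ∑ k, σ₃ k * u (a, j, k))
  obtain ⟨τ₃, hτ₃, hcard₃, hle₃⟩ := h₃.exists_card_posSupport_le_mulVec_le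
    (of fun a k => ∑ j, τ₂ j * u (a, j, k))
  refine ⟨τ₂, τ₃, hτ₂, hτ₃, hcard₂, hcard₃, ?_⟩
  calc expectedPayoff u τ₂ τ₃ ≤ expectedPayoff u τ₂ σ₃ := by
        simpa only [expectedPayoff_eq_mulVec_right] using hle₃
    _ ≤ expectedPayoff u σ₂ σ₃ := by
        simpa only [expectedPayoff_eq_mulVec_left] using hle₂

end Game

/-- Support enumeration: for `1 ≤ k ≤ n`, the minmax value of a `k × n × n` game equals
the minimum over all pairs of size-`k` supports `T₂, T₃ ⊆ Fin n` of the minmax value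
restricted to mixed strategies supported in `T₂` and `T₃` respectively. -/
theorem minmax_support_enumeration (k n : ℕ) (hk : 1 ≤ k) (hkn : k ≤ n)
    (u₁ : Fin k × Fin n × Fin n → ℝ) :
    minmaxVal u₁ =
      sInf { v : ℝ | ∃ T₂ T₃ : Finset (Fin n), T₂.card = k ∧ T₃.card = k ∧
        ∃ σ₂ σ₃ : Fin n → ℝ, IsMixedStrategy σ₂ ∧ IsMixedStrategy σ₃ ∧
          (∀ j, 0 < σ₂ j → j ∈ T₂) ∧ (∀ j, 0 < σ₃ j → j ∈ T₃) ∧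
          v = ⨆ a : Fin k, ∑ j : Fin n, ∑ k' : Fin n, σ₂ j * σ₃ k' * u₁ (a, j, k') } := by
  have : Nonempty (Fin k) := ⟨⟨0, hk⟩⟩
  refine csInf_eq_csInf_of_forall_exists_le ?_ ?_
  · rintro _ ⟨σ₂, σ₃, h₂, h₃, rfl⟩
    obtain ⟨τ₂, τ₃, hτ₂, hτ₃, hcard₂, hcard₃, hle⟩ :=
      exists_card_posSupport_le_expectedPayoff_le u₁ h₂ h₃
    rw [Fintype.card_fin] at hcard₂ hcard₃
    obtain ⟨T₂, hT₂, hT₂k⟩ := exists_superset_card_eq hcard₂ (by simpa using hkn)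
    obtain ⟨T₃, hT₃, hT₃k⟩ := exists_superset_card_eq hcard₃ (by simpa using hkn)
    exact ⟨_, ⟨T₂, T₃, hT₂k, hT₃k, τ₂, τ₃, hτ₂, hτ₃, fun j hj => hT₂ (mem_posSupport.mpr hj),
      fun j hj => hT₃ (mem_posSupport.mpr hj), rfl⟩, ciSup_mono (Set.finite_range _).bddAbove hle⟩
  · rintro _ ⟨-, -, -, -, σ₂, σ₃, h₂, h₃, -, -, rfl⟩
    exact ⟨_, ⟨σ₂, σ₃, h₂, h₃, rfl⟩, le_rfl⟩
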